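/- There exist constants b > 0 and δ > 0 such that, using K₂(x) = K₀(x) + (2/x)K₁(x), the quantity π x² [K₀(x)K₂(x) - K₁(x)²]/K₀(x)² tends to 0 as x → 0⁺, and for all x ∈ (0, δ) it is bounded by b/|ln x|. -/

import Mathlib

open Real Set Filter

/-- The modified Bessel function of the second kind (Macdonald function) of
order `ν`, via its integral representation `K_ν(x) = ∫₀^∞ e^{-x cosh t} cosh(νt) dt`. -/
noncomputable def besselK (ν x : ℝ) : ℝ :=
  ∫ t in Set.Ioi (0 : ℝ), Real.exp (-x * Real.cosh t) * Real.cosh (ν * t)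

open MeasureTheory

lemma cosh_lb (t : ℝ) (ht : 0 ≤ t) : 1 + t ^ 2 / 2 ≤ Real.cosh t := by
  have h1 : t / 2 ≤ Real.sinh (t / 2) := Real.self_le_sinh_iff.2 (by linarith)
  have h2 : Real.cosh t = 1 + 2 * Real.sinh (t / 2) ^ 2 := by
    have h := Real.cosh_two_mul (t / 2)
    rw [show 2 * (t / 2) = t by ring] at h
    rw [h, Real.cosh_sq]; ring
  nlinarith [h1, ht]

lemma cosh_le_exp_self (t : ℝ) (ht : 0 ≤ t) : Real.cosh t ≤ Real.exp t := by
  rw [Real.cosh_eq]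
  have := Real.exp_le_exp.2 (by linarith : -t ≤ t)
  linarith

lemma sinh_le_cosh' (t : ℝ) : Real.sinh t ≤ Real.cosh t := by
  have := Real.cosh_sub_sinh t
  have := Real.exp_pos (-t)
  linarith

lemma cosh_le_sinh_add_one (t : ℝ) (ht : 0 ≤ t) : Real.cosh t ≤ Real.sinh t + 1 := by
  have := Real.cosh_sub_sinh t
  have h2 : Real.exp (-t) ≤ 1 := Real.exp_le_one_iff.2 (by linarith)
  linarith

lemma besselK_integrableOn {ν x : ℝ} (hν : 0 ≤ ν) (hx : 0 < x) :
    IntegrableOn (fun t => Real.exp (-x * Real.cosh t) * Real.cosh (ν * t))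
      (Set.Ioi (0 : ℝ)) := by
  have hg : Integrable (fun t : ℝ =>
      Real.exp (ν ^ 2 / x - x) * Real.exp (-(x / 4) * t ^ 2)) :=
    (integrable_exp_neg_mul_sq (by positivity)).const_mul _
  refine (hg.integrableOn).mono' ?_ ?_
  · exact ((Real.continuous_exp.comp (continuous_const.mul Real.continuous_cosh)).mul
      (Real.continuous_cosh.comp (continuous_const.mul continuous_id))).aestronglyMeasurable
  · filter_upwards [ae_restrict_mem measurableSet_Ioi] with t ht
    have ht0 : (0 : ℝ) ≤ t := le_of_lt ht
    have h1 : Real.exp (-x * Real.cosh t) ≤ Real.exp (-x * (1 + t ^ 2 / 2)) := by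
      apply Real.exp_le_exp.2
      have := cosh_lb t ht0
      nlinarith
    have h2 : Real.cosh (ν * t) ≤ Real.exp (ν * t) :=
      cosh_le_exp_self _ (by positivity)
    have hnn : (0 : ℝ) ≤ Real.cosh (ν * t) := (Real.cosh_pos _).le
    have h3 : Real.exp (-x * Real.cosh t) * Real.cosh (ν * t)
        ≤ Real.exp (-x * (1 + t ^ 2 / 2)) * Real.exp (ν * t) :=
      mul_le_mul h1 h2 hnn (Real.exp_pos _).le
    rw [norm_of_nonneg (by positivity)]
    refine h3.trans ?_
    rw [← Real.exp_add, ← Real.exp_add]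
    apply Real.exp_le_exp.2
    have key : 0 ≤ (x * t - 2 * ν) ^ 2 := sq_nonneg _
    have hxx : ν ^ 2 / x * x = ν ^ 2 := div_mul_cancel₀ _ hx.ne'
    nlinarith [key, hx, sq_nonneg t]

lemma besselK_nonneg (ν x : ℝ) : 0 ≤ besselK ν x := by
  apply setIntegral_nonneg measurableSet_Ioi
  intro t _
  positivity

lemma besselK_zero_lb {x : ℝ} (hx : 0 < x) (hx1 : x ≤ 1) :
    Real.exp (-1) * (-Real.log x) ≤ besselK 0 x := by
  set L : ℝ := -Real.log x with hL
  have hL0 : 0 ≤ L := by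
    have : Real.log x ≤ 0 := Real.log_nonpos hx.le hx1
    linarith
  have hint := besselK_integrableOn (le_refl (0:ℝ)) hx
  have hcoshL : x * Real.cosh L ≤ 1 := by
    have : Real.cosh L = (Real.exp L + Real.exp (-L)) / 2 := Real.cosh_eq L
    have he1 : Real.exp L = x⁻¹ := by
      rw [hL, Real.exp_neg, Real.exp_log hx]
    have he2 : Real.exp (-L) = x := by
      rw [hL, neg_neg, Real.exp_log hx]
    rw [this, he1, he2]
    have hxinv : x * x⁻¹ = 1 := mul_inv_cancel₀ hx.ne'
    nlinarith [hxinv, hx1, hx]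
  have step1 : ∫ t in Set.Ioc (0:ℝ) L, Real.exp (-x * Real.cosh t) * Real.cosh (0 * t)
      ≤ besselK 0 x := by
    apply setIntegral_mono_set hint
    · filter_upwards with t; positivity
    · exact HasSubset.Subset.eventuallyLE Set.Ioc_subset_Ioi_self
  have step2 : Real.exp (-1) * L
      ≤ ∫ t in Set.Ioc (0:ℝ) L, Real.exp (-x * Real.cosh t) * Real.cosh (0 * t) := by
    have hmeas : (MeasureTheory.volume (Set.Ioc (0:ℝ) L)).toReal = L := by
      rw [Real.volume_Ioc, ENNReal.toReal_ofReal (by linarith)]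
      ring
    have key := setIntegral_ge_of_const_le (c := Real.exp (-1))
      (s := Set.Ioc (0:ℝ) L) (measurableSet_Ioc)
      (by simp [Real.volume_Ioc])
      (fun t htm => by
        simp only [zero_mul, Real.cosh_zero, mul_one]
        apply Real.exp_le_exp.2
        have hcosh : Real.cosh t ≤ Real.cosh L := by
          rw [Real.cosh_le_cosh, abs_of_nonneg htm.1.le, abs_of_nonneg hL0]
          exact htm.2
        nlinarith [hcosh, hcoshL, hx])
      (hint.mono_set Set.Ioc_subset_Ioi_self)
    rw [show MeasureTheory.volume.real (Set.Ioc (0:ℝ) L) = L from hmeas, smul_eq_mul, mul_comm] at key; exact key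
  exact step2.trans step1

lemma besselK_one_ub {x : ℝ} (hx : 0 < x) : x * besselK 1 x ≤ 1 := by
  set F : ℝ → ℝ := fun t => -Real.exp (-x * Real.sinh t) with hF
  set F' : ℝ → ℝ := fun t => x * Real.cosh t * Real.exp (-x * Real.sinh t) with hF'
  have hderiv : ∀ t ∈ Set.Ici (0:ℝ), HasDerivAt F (F' t) t := by
    intro t _
    have h1 : HasDerivAt (fun t => -x * Real.sinh t) (-x * Real.cosh t) t :=
      (Real.hasDerivAt_sinh t).const_mul (-x)
    have h2 := (h1.exp).fun_neg
    refine h2.congr_deriv ?_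
    simp [hF']; ring
  have hsinh : Tendsto Real.sinh atTop atTop := by
    apply tendsto_atTop_mono' _ _ tendsto_id
    filter_upwards [eventually_ge_atTop (0:ℝ)] with t ht
    exact Real.self_le_sinh_iff.2 ht
  have htends : Tendsto F atTop (nhds 0) := by
    rw [hF]
    have h1 : Tendsto (fun t => -x * Real.sinh t) atTop atBot :=
      (hsinh.const_mul_atTop_of_neg (by linarith : -x < 0))
    have := (Real.tendsto_exp_atBot.comp h1).neg
    simpa using this
  have hpos : ∀ t ∈ Set.Ioi (0:ℝ), 0 ≤ F' t := by
    intro t _; rw [hF']; positivity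
  have hint : ∫ t in Set.Ioi (0:ℝ), F' t = 1 := by
    rw [integral_Ioi_of_hasDerivAt_of_nonneg' hderiv hpos htends]
    simp [hF]
  have hintegrable : IntegrableOn F' (Set.Ioi (0:ℝ)) :=
    integrableOn_Ioi_deriv_of_nonneg' hderiv hpos htends
  have hbound : x * besselK 1 x ≤ ∫ t in Set.Ioi (0:ℝ), F' t := by
    rw [besselK, ← MeasureTheory.integral_const_mul]
    apply setIntegral_mono_on
    · exact (besselK_integrableOn (by norm_num) hx).const_mul x
    · exact hintegrable
    · exact measurableSet_Ioi
    · intro t ht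
      rw [hF']
      have h1 : Real.exp (-x * Real.cosh t) ≤ Real.exp (-x * Real.sinh t) := by
        apply Real.exp_le_exp.2
        have := sinh_le_cosh' t
        nlinarith
      have hc : (0:ℝ) ≤ Real.cosh t := (Real.cosh_pos t).le
      rw [one_mul]
      calc x * (Real.exp (-x * Real.cosh t) * Real.cosh t)
          ≤ x * (Real.exp (-x * Real.sinh t) * Real.cosh t) := by
            apply mul_le_mul_of_nonneg_left _ hx.le
            exact mul_le_mul_of_nonneg_right h1 hc
        _ = x * Real.cosh t * Real.exp (-x * Real.sinh t) := by ring
  rw [hint] at hbound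
  exact hbound

lemma besselK_two_ub {x : ℝ} (hx : 0 < x) : x ^ 2 * besselK 2 x ≤ 2 * (x + 1) := by
  set F : ℝ → ℝ := fun t => -((x * Real.sinh t + (x + 1)) * Real.exp (-x * Real.sinh t)) with hF
  set F' : ℝ → ℝ := fun t =>
    x ^ 2 * (Real.sinh t + 1) * Real.cosh t * Real.exp (-x * Real.sinh t) with hF'
  have hderiv : ∀ t ∈ Set.Ici (0:ℝ), HasDerivAt F (F' t) t := by
    intro t _
    have hs := Real.hasDerivAt_sinh t
    have h1 : HasDerivAt (fun t => x * Real.sinh t + (x + 1)) (x * Real.cosh t) t :=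
      (hs.const_mul x).add_const (x + 1)
    have h2 : HasDerivAt (fun t => Real.exp (-x * Real.sinh t))
        (Real.exp (-x * Real.sinh t) * (-x * Real.cosh t)) t :=
      (hs.const_mul (-x)).exp
    have h3 := (h1.fun_mul h2).fun_neg
    refine h3.congr_deriv ?_
    rw [hF']; ring
  have hsinh : Tendsto Real.sinh atTop atTop := by
    apply tendsto_atTop_mono' _ _ tendsto_id
    filter_upwards [eventually_ge_atTop (0:ℝ)] with t ht
    exact Real.self_le_sinh_iff.2 ht
  have htends : Tendsto F atTop (nhds 0) := by
    have hh : Tendsto (fun s : ℝ => -((x * s + (x + 1)) * Real.exp (-x * s))) atTop (nhds 0) := by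
      have hxs : Tendsto (fun s : ℝ => x * s) atTop atTop :=
        tendsto_id.const_mul_atTop hx
      have h1 : Tendsto (fun s : ℝ => (x * s) * Real.exp (-(x * s))) atTop (nhds 0) := by
        have := (tendsto_pow_mul_exp_neg_atTop_nhds_zero 1).comp hxs
        simpa [pow_one, Function.comp_def] using this
      have h2 : Tendsto (fun s : ℝ => Real.exp (-(x * s))) atTop (nhds 0) := by
        have : Tendsto (fun s : ℝ => -(x * s)) atTop atBot := by
          simpa [neg_mul] using hxs.const_mul_atTop_of_neg (by norm_num : (-1:ℝ) < 0)
        exact Real.tendsto_exp_atBot.comp this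
      have h3 : Tendsto (fun s : ℝ =>
          (x * s) * Real.exp (-(x * s)) + (x + 1) * Real.exp (-(x * s))) atTop (nhds 0) := by
        have := h1.add (h2.const_mul (x + 1))
        simpa using this
      have := h3.neg
      simp only [neg_zero] at this
      convert this using 2 with s
      ring_nf
    have := hh.comp hsinh
    simpa [Function.comp_def, hF] using this
  have hpos : ∀ t ∈ Set.Ioi (0:ℝ), 0 ≤ F' t := by
    intro t ht
    have hsn : 0 ≤ Real.sinh t := Real.sinh_nonneg_iff.2 (le_of_lt ht)
    rw [hF']; positivity
  have hint : ∫ t in Set.Ioi (0:ℝ), F' t = x + 1 := by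
    rw [integral_Ioi_of_hasDerivAt_of_nonneg' hderiv hpos htends]
    simp [hF]
  have hintegrable : IntegrableOn F' (Set.Ioi (0:ℝ)) :=
    integrableOn_Ioi_deriv_of_nonneg' hderiv hpos htends
  have hbound : x ^ 2 * besselK 2 x ≤ ∫ t in Set.Ioi (0:ℝ), 2 * F' t := by
    rw [besselK, ← MeasureTheory.integral_const_mul]
    apply setIntegral_mono_on
    · exact (besselK_integrableOn (by norm_num) hx).const_mul _
    · exact hintegrable.const_mul 2
    · exact measurableSet_Ioi
    · intro t ht
      have ht0 : (0:ℝ) ≤ t := le_of_lt ht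
      have h1 : Real.exp (-x * Real.cosh t) ≤ Real.exp (-x * Real.sinh t) := by
        apply Real.exp_le_exp.2
        have := sinh_le_cosh' t
        nlinarith
      have hc2 : Real.cosh (2 * t) ≤ 2 * Real.cosh t * (Real.sinh t + 1) := by
        have e1 : Real.cosh (2 * t) = Real.cosh t ^ 2 + Real.sinh t ^ 2 :=
          Real.cosh_two_mul t
        have e2 : Real.sinh t ^ 2 = Real.cosh t ^ 2 - 1 := by
          have := Real.cosh_sq t; linarith
        have e3 : Real.cosh t ≤ Real.sinh t + 1 := cosh_le_sinh_add_one t ht0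
        have hc : (0:ℝ) ≤ Real.cosh t := (Real.cosh_pos t).le
        nlinarith
      have hc2nn : (0:ℝ) ≤ Real.cosh (2 * t) := (Real.cosh_pos _).le
      calc x ^ 2 * (Real.exp (-x * Real.cosh t) * Real.cosh (2 * t))
          ≤ x ^ 2 * (Real.exp (-x * Real.sinh t) * (2 * Real.cosh t * (Real.sinh t + 1))) := by
            apply mul_le_mul_of_nonneg_left _ (by positivity)
            exact mul_le_mul h1 hc2 hc2nn (Real.exp_pos _).le
        _ = 2 * F' t := by rw [hF']; ring
  rw [MeasureTheory.integral_const_mul, hint] at hbound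
  linarith

lemma key_bounds {x : ℝ} (hx : 0 < x) (hx' : x < Real.exp (-1)) :
    π * x ^ 2 * (besselK 0 x * besselK 2 x - (besselK 1 x) ^ 2) / (besselK 0 x) ^ 2
      ≤ (4 * π * Real.exp 1 ^ 2) / |Real.log x| ∧
    -((4 * π * Real.exp 1 ^ 2) / |Real.log x|)
      ≤ π * x ^ 2 * (besselK 0 x * besselK 2 x - (besselK 1 x) ^ 2) / (besselK 0 x) ^ 2 := by
  have hx1 : x ≤ 1 := by
    have : Real.exp (-1) ≤ 1 := Real.exp_le_one_iff.2 (by norm_num)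
    linarith
  set L : ℝ := -Real.log x with hLdef
  have hL1 : 1 < L := by
    have : Real.log x < Real.log (Real.exp (-1)) :=
      Real.log_lt_log hx hx'
    rw [Real.log_exp] at this
    simp only [hLdef]; linarith
  have hLabs : |Real.log x| = L := by
    rw [hLdef, abs_of_neg]; linarith
  have hLpos : 0 < L := by linarith
  set K0 := besselK 0 x
  set K1 := besselK 1 x
  set K2 := besselK 2 x
  have hK0lb : Real.exp (-1) * L ≤ K0 := besselK_zero_lb hx hx1
  have hK0pos : 0 < K0 := lt_of_lt_of_le (by positivity) hK0lb
  have hK1 : x * K1 ≤ 1 := besselK_one_ub hx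
  have hK2 : x ^ 2 * K2 ≤ 2 * (x + 1) := besselK_two_ub hx
  have hK1nn : 0 ≤ K1 := besselK_nonneg 1 x
  have hK2nn : 0 ≤ K2 := besselK_nonneg 2 x
  have hK2' : x ^ 2 * K2 ≤ 4 := by nlinarith
  have hK1' : x ^ 2 * K1 ^ 2 ≤ 1 := by nlinarith [mul_nonneg hx.le hK1nn]
  have he : Real.exp (-1) * Real.exp 1 = 1 := by
    rw [← Real.exp_add]; norm_num
  have hepos : (0:ℝ) < Real.exp 1 := Real.exp_pos 1
  have hK0sq : 0 < K0 ^ 2 := by positivity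
  rw [hLabs]
  constructor
  · rw [div_le_div_iff₀ hK0sq hLpos]
    -- π x² (K0 K2 - K1²) * L ≤ 4π e² K0²
    have h1 : π * x ^ 2 * (K0 * K2 - K1 ^ 2) * L ≤ π * L * (4 * K0) := by
      have hA : x ^ 2 * (K0 * K2) ≤ 4 * K0 := by nlinarith
      have hB : 0 ≤ x ^ 2 * K1 ^ 2 := by positivity
      have hπ : (0:ℝ) < π := Real.pi_pos
      nlinarith [mul_pos hπ hLpos]
    have hπ : (0:ℝ) < π := Real.pi_pos
    have he1 : (1:ℝ) ≤ Real.exp 1 := by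
      have := Real.add_one_le_exp (1:ℝ); linarith
    have hLe : L ≤ Real.exp 1 * K0 := by
      have := mul_le_mul_of_nonneg_left hK0lb hepos.le
      rw [← mul_assoc, mul_comm (Real.exp 1) (Real.exp (-1))] at this
      rw [he, one_mul] at this
      linarith
    have h2 : π * L * (4 * K0) ≤ 4 * π * Real.exp 1 ^ 2 * K0 ^ 2 := by
      calc π * L * (4 * K0) = 4 * π * K0 * L := by ring
        _ ≤ 4 * π * K0 * (Real.exp 1 * K0) :=
            mul_le_mul_of_nonneg_left hLe (by positivity)
        _ = 4 * π * Real.exp 1 * K0 ^ 2 := by ring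
        _ ≤ 4 * π * Real.exp 1 ^ 2 * K0 ^ 2 := by
            nlinarith [mul_nonneg (by positivity : (0:ℝ) ≤ 4 * π * Real.exp 1 * K0 ^ 2)
              (by linarith : (0:ℝ) ≤ Real.exp 1 - 1)]
    linarith
  · rw [← neg_div, div_le_div_iff₀ hLpos hK0sq]
    -- -(4π e²) * K0² ≤ π x² (K0 K2 - K1²) * L
    have hπ : (0:ℝ) < π := Real.pi_pos
    have hA : -(π * L) ≤ π * x ^ 2 * (K0 * K2 - K1 ^ 2) * L := by
      have hB : 0 ≤ x ^ 2 * (K0 * K2) := by positivity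
      nlinarith [mul_pos hπ hLpos]
    have hsq : (Real.exp (-1) * L) ^ 2 ≤ K0 ^ 2 :=
      pow_le_pow_left₀ (by positivity) hK0lb 2
    have h2 : Real.exp 1 ^ 2 * Real.exp (-1) ^ 2 = 1 := by
      rw [← mul_pow, ← Real.exp_add]; norm_num
    have hid : 4 * π * Real.exp 1 ^ 2 * (Real.exp (-1) * L) ^ 2 = 4 * π * L ^ 2 := by
      linear_combination 4 * π * L ^ 2 * h2
    have hC : π * L ≤ 4 * π * Real.exp 1 ^ 2 * K0 ^ 2 := by
      calc π * L ≤ 4 * π * L ^ 2 := by nlinarith [mul_pos hπ hLpos, hL1]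
        _ = 4 * π * Real.exp 1 ^ 2 * (Real.exp (-1) * L) ^ 2 := hid.symm
        _ ≤ 4 * π * Real.exp 1 ^ 2 * K0 ^ 2 :=
            mul_le_mul_of_nonneg_left hsq (by positivity)
    linarith

theorem mollifier_energy_vanishes :
    Tendsto (fun x : ℝ =>
        π * x ^ 2 * (besselK 0 x * besselK 2 x - (besselK 1 x) ^ 2) / (besselK 0 x) ^ 2)
      (nhdsWithin 0 (Set.Ioi 0)) (nhds 0) ∧
    ∃ b > (0 : ℝ), ∃ δ > (0 : ℝ), ∀ x ∈ Set.Ioo (0 : ℝ) δ,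
      π * x ^ 2 * (besselK 0 x * besselK 2 x - (besselK 1 x) ^ 2) / (besselK 0 x) ^ 2
        ≤ b / |Real.log x| := by
  set b : ℝ := 4 * π * Real.exp 1 ^ 2 with hb
  have hbpos : 0 < b := by positivity
  have hmem : Set.Ioo (0:ℝ) (Real.exp (-1)) ∈ nhdsWithin (0:ℝ) (Set.Ioi 0) :=
    Ioo_mem_nhdsGT_of_mem ⟨le_refl 0, Real.exp_pos _⟩
  have habs : Tendsto (fun x : ℝ => |Real.log x|) (nhdsWithin 0 (Set.Ioi 0)) atTop :=
    tendsto_abs_atBot_atTop.comp Real.tendsto_log_nhdsGT_zero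
  have hupper : Tendsto (fun x : ℝ => b / |Real.log x|) (nhdsWithin 0 (Set.Ioi 0)) (nhds 0) :=
    Tendsto.div_atTop tendsto_const_nhds habs
  have hlower : Tendsto (fun x : ℝ => -(b / |Real.log x|)) (nhdsWithin 0 (Set.Ioi 0)) (nhds 0) := by
    have := hupper.neg; simpa using this
  constructor
  · apply tendsto_of_tendsto_of_tendsto_of_le_of_le' hlower hupper
    · filter_upwards [hmem] with x hx
      exact (key_bounds hx.1 hx.2).2
    · filter_upwards [hmem] with x hx
      exact (key_bounds hx.1 hx.2).1
  · exact ⟨b, hbpos, Real.exp (-1), Real.exp_pos _,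
      fun x hx => (key_bounds hx.1 hx.2).1⟩
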